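/- Let (A,[·,·],α) be a Hom-Leibniz algebra over a field K, let (l,r,β,V) be a bimodule of it, and let T: V→A be an O-operator associated to (l,r,β,V). Define on V the operations u ≺ v = r(T(v))u and u ≻ v = l(T(u))v. Then (V,≺,≻,β) is a Hom-Leibniz dendriform algebra, and T is a morphism of Hom-Leibniz algebras from (V, [·,·]_V, β), where [u,v]_V = u≺v + u≻v, to (A,[·,·],α), i.e. T([u,v]_V) = [T(u),T(v)] for all u,v ∈ V. -/
import Mathlib


/-- A Hom-Leibniz algebra structure. -/
def HomLeibniz {K A : Type*} [Field K] [AddCommGroup A] [Module K A]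
    (br : A →ₗ[K] A →ₗ[K] A) (α : A →ₗ[K] A) : Prop :=
  ∀ x y z : A, br (α x) (br y z) = br (br x y) (α z) + br (α y) (br x z)

/-- A bimodule `(l, r, β, V)` of a Hom-Leibniz algebra `(A, br, α)`. -/
def HomLeibnizBimodule {K A V : Type*} [Field K] [AddCommGroup A] [Module K A]
    [AddCommGroup V] [Module K V]
    (br : A →ₗ[K] A →ₗ[K] A) (α : A →ₗ[K] A)
    (l r : A →ₗ[K] V →ₗ[K] V) (β : V →ₗ[K] V) : Prop :=
  (∀ x y v, l (α x) (l y v) = l (br x y) (β v) + l (α y) (l x v)) ∧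
  (∀ x y v, l (α x) (r y v) = r (α y) (l x v) + r (br x y) (β v)) ∧
  (∀ x y v, r (br x y) (β v) = r (α y) (r x v) + l (α x) (r y v)) ∧
  (∀ x v, β (l x v) = l (α x) (β v)) ∧
  (∀ x v, β (r x v) = r (α x) (β v))

/-- A Hom-Leibniz dendriform algebra `(A, ≺, ≻, α)`, with `p = ≺` and `s = ≻`
and `[x,y] = x≺y + x≻y`. -/
def HomLeibnizDendriform {K A : Type*} [Field K] [AddCommGroup A] [Module K A]
    (p s : A →ₗ[K] A →ₗ[K] A) (α : A →ₗ[K] A) : Prop :=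
  (∀ x y z : A, s (p x y + s x y) (α z) = s (α x) (s y z) - s (α y) (s x z)) ∧
  (∀ x y z : A, s (α x) (p y z) = p (s x y) (α z) + p (α y) (p x z + s x z)) ∧
  (∀ x y z : A, p (α x) (p y z + s y z) = p (p x y) (α z) + s (α y) (p x z))

/-- An `𝒪`-operator `T : V → A` associated to a bimodule `(l, r, β, V)` of a
Hom-Leibniz algebra `(A, br, α)`. -/
def OOperator {K A V : Type*} [Field K] [AddCommGroup A] [Module K A]
    [AddCommGroup V] [Module K V]
    (br : A →ₗ[K] A →ₗ[K] A) (α : A →ₗ[K] A)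
    (l r : A →ₗ[K] V →ₗ[K] V) (β : V →ₗ[K] V) (T : V →ₗ[K] A) : Prop :=
  (∀ v : V, α (T v) = T (β v)) ∧
  (∀ u v : V, br (T u) (T v) = T (l (T u) v + r (T v) u))

/-- an `𝒪`-operator `T` on a Hom-Leibniz algebra induces a
Hom-Leibniz dendriform structure on `V` via `u ≺ v = r(T(v))u`,
`u ≻ v = l(T(u))v`, and `T` is a morphism from the associated Hom-Leibniz
algebra on `V` to `(A, br, α)`. -/
theorem homLeibnizDendriform_of_oOperator
    {K A V : Type*} [Field K] [AddCommGroup A] [Module K A]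
    [AddCommGroup V] [Module K V]
    (br : A →ₗ[K] A →ₗ[K] A) (α : A →ₗ[K] A)
    (l r : A →ₗ[K] V →ₗ[K] V) (β : V →ₗ[K] V)
    (hA : HomLeibniz br α)
    (hV : HomLeibnizBimodule br α l r β)
    (T : V →ₗ[K] A)
    (hT : OOperator br α l r β T) :
    HomLeibnizDendriform ((r.comp T).flip) (l.comp T) β ∧
    (∀ u v : V, T ((r.comp T).flip u v + (l.comp T) u v) = br (T u) (T v)) := by
  obtain ⟨h1, h2, h3, h4, h5⟩ := hV
  obtain ⟨hTα, hTbr⟩ := hT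
  have key : ∀ u v : V, T (r (T v) u + l (T u) v) = br (T u) (T v) := by
    intro u v
    rw [show r (T v) u + l (T u) v = l (T u) v + r (T v) u from add_comm _ _, ← hTbr]
  refine ⟨⟨?_, ?_, ?_⟩, fun u v => key u v⟩
  · intro x y z
    simp only [LinearMap.flip_apply, LinearMap.comp_apply, key]
    have h := h1 (T x) (T y) z
    rw [hTα, hTα] at h
    rw [eq_sub_iff_add_eq]; exact h.symm
  · intro x y z
    simp only [LinearMap.flip_apply, LinearMap.comp_apply, key]
    have h := h2 (T x) (T z) y
    rw [hTα, hTα] at h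
    exact h
  · intro x y z
    simp only [LinearMap.flip_apply, LinearMap.comp_apply, key]
    have h := h3 (T y) (T z) x
    rw [hTα, hTα] at h
    exact h
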